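/- arXiv:0905.4219 — 3 statements merged into one kernel-verified Lean document; each statement's English description precedes it below -/
import Mathlib

section
/- Consider a GSWF on three alternatives with n voters satisfying the IIA condition, whose choice functions f, g, h : {0,1}^n → {0,1} are monotone increasing. If the individual preferences are distributed according to an even product distribution D(α,β,γ) with α, β, γ ≤ 1/4, then the probability of irrational choice satisfies W(f,g,h) ≤ p₁p₂p₃ + (1−p₁)(1−p₂)(1−p₃), where p₁ = E[f], p₂ = E[g], p₃ = E[h]. -/
open Finset Real

noncomputable section

namespace GSWF

/-- Walsh function `r_S(x) = ∏_{i∈S} (2 x_i - 1)` on the discrete cube. -/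
def walsh {n : ℕ} (S : Finset (Fin n)) (x : Fin n → Bool) : ℝ :=
  ∏ i ∈ S, (if x i then (1 : ℝ) else -1)

/-- Fourier–Walsh coefficient `f̂(S) = 2^{-n} ∑_x f(x) r_S(x)`. -/
def coeff {n : ℕ} (f : (Fin n → Bool) → ℝ) (S : Finset (Fin n)) : ℝ :=
  (∑ x : Fin n → Bool, f x * walsh S x) / 2 ^ n

/-- Expectation under the uniform measure on the discrete cube. -/
def expect {n : ℕ} (f : (Fin n → Bool) → ℝ) : ℝ :=
  (∑ x : Fin n → Bool, f x) / 2 ^ n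

/-- Biased inner product `⟨⟨f,g⟩⟩_δ = ∑_{S ≠ ∅} f̂(S) ĝ(S) δ^{|S|}`. -/
def bip {n : ℕ} (δ : ℝ) (f g : (Fin n → Bool) → ℝ) : ℝ :=
  ∑ S ∈ Finset.univ.filter (fun S : Finset (Fin n) => S ≠ ∅),
    coeff f S * coeff g S * δ ^ S.card

/-- Probability of a single voter's preference triple under `D(α,β,γ)`. -/
def prTriple (α β γ : ℝ) : Bool → Bool → Bool → ℝ
  | true, true, false => α
  | false, false, true => α
  | false, true, true => β
  | true, false, false => β
  | true, false, true => γ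
  | false, true, false => γ
  | _, _, _ => 0

/-- Probability of a profile under the even product distribution `D(α,β,γ)`. -/
def prProfile {n : ℕ} (α β γ : ℝ) (x y z : Fin n → Bool) : ℝ :=
  ∏ i, prTriple α β γ (x i) (y i) (z i)

/-- Probability of an irrational outcome `W(f,g,h)` under `D(α,β,γ)`. -/
def W {n : ℕ} (α β γ : ℝ) (f g h : (Fin n → Bool) → ℝ) : ℝ :=
  ∑ x : Fin n → Bool, ∑ y : Fin n → Bool, ∑ z : Fin n → Bool,
    prProfile α β γ x y z *
      (f x * g y * h z + (1 - f x) * (1 - g y) * (1 - h z))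

/-- A real-valued function on the cube that takes only the values 0 and 1. -/
def IsBooleanFn {n : ℕ} (f : (Fin n → Bool) → ℝ) : Prop :=
  ∀ x, f x = 0 ∨ f x = 1

/-- Monotone increasing function on the discrete cube. -/
def MonotoneCube {n : ℕ} (f : (Fin n → Bool) → ℝ) : Prop :=
  ∀ x y : Fin n → Bool, (∀ i, x i ≤ y i) → f x ≤ f y

/-- Monotone decreasing function on the discrete cube. -/
def AntitoneCube {n : ℕ} (f : (Fin n → Bool) → ℝ) : Prop :=
  ∀ x y : Fin n → Bool, (∀ i, x i ≤ y i) → f y ≤ f x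

/-- Invariance under a transitive group of permutations of the coordinates. -/
def TransitiveSymmetric {n : ℕ} (f : (Fin n → Bool) → ℝ) : Prop :=
  ∃ G : Subgroup (Equiv.Perm (Fin n)),
    (∀ i j : Fin n, ∃ σ ∈ G, σ i = j) ∧
    ∀ σ ∈ G, ∀ x : Fin n → Bool, f (x ∘ σ) = f x

/-- The majority function: 1 iff more than half of the coordinates are 1. -/
def maj (n : ℕ) (x : Fin n → Bool) : ℝ :=
  if n < 2 * (Finset.univ.filter (fun i => x i = true)).card then 1 else 0

/-- The dual function `f'(x) = 1 - f(1-x)`. -/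
def dualFn {n : ℕ} (f : (Fin n → Bool) → ℝ) (x : Fin n → Bool) : ℝ :=
  1 - f (fun i => !(x i))

/-- The Bonamie–Beckner noise operator `T_δ`. -/
def Tnoise {n : ℕ} (δ : ℝ) (f : (Fin n → Bool) → ℝ) (x : Fin n → Bool) : ℝ :=
  ∑ S : Finset (Fin n), δ ^ S.card * coeff f S * walsh S x

/-- The AND function on the discrete cube. -/
def andFn (n : ℕ) (x : Fin n → Bool) : ℝ :=
  if ∀ i, x i = true then 1 else 0

/-- The OR function on the discrete cube (the dual of AND). -/
def orFn (n : ℕ) (x : Fin n → Bool) : ℝ :=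
  if ∃ i, x i = true then 1 else 0


/-! The integrand `fgh + (1-f)(1-g)(1-h)` equals `1 - f - g - h + fg + fh + gh`, so `W` is an
affine combination of pairwise expectations `E[F(x)G(y)]`, each taken over a two-dimensional
marginal of `D(α,β,γ)`. Every such marginal is a product measure on pairs of bits that agree with
probability at most `1/2` in each coordinate, and for such an anticorrelated product measure a
Harris-type inequality `E[F(x)G(y)] ≤ E[F] E[G]` holds for monotone `F`, `G`: in one coordinate the
defect is `(a - b)/2 (F₁ - F₀)(G₁ - G₀) ≤ 0`, and it tensorises by induction on `n`. -/

lemma MonotoneCube.monotone {n : ℕ} {f : (Fin n → Bool) → ℝ} (hf : MonotoneCube f) :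
    Monotone f :=
  fun x y hxy => hf x y hxy

lemma expect_one {n : ℕ} : expect (1 : (Fin n → Bool) → ℝ) = 1 := by
  simp [expect]

lemma sum_fun_fin_succ {α M : Type*} [Fintype α] [AddCommMonoid M] {n : ℕ}
    (φ : (Fin (n + 1) → α) → M) :
    ∑ x, φ x = ∑ s, ∑ x : Fin n → α, φ (Fin.cons s x) := by
  rw [← Fintype.sum_equiv (Fin.consEquiv fun _ => α) (fun p => φ (Fin.cons p.1 p.2)) φ
    fun _ => rfl, Fintype.sum_prod_type]

def agreeWeight (a b : ℝ) (s t : Bool) : ℝ := if s = t then a else b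

lemma agreeWeight_comm (a b : ℝ) (s t : Bool) : agreeWeight a b s t = agreeWeight a b t s := by
  simp only [agreeWeight, eq_comm]

lemma sum_prod_agreeWeight {n : ℕ} (a b : ℝ) (x : Fin n → Bool) :
    ∑ y : Fin n → Bool, ∏ i, agreeWeight a b (x i) (y i) = (a + b) ^ n := by
  rw [← Fintype.prod_sum]
  simp only [Fintype.sum_bool, agreeWeight]
  rw [Finset.prod_congr rfl fun i _ => show (if x i = true then a else b) +
      (if x i = false then a else b) = a + b by cases x i <;> simp [add_comm]]
  simp

def pairExpect {n : ℕ} (a b : ℝ) (F G : (Fin n → Bool) → ℝ) : ℝ :=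
  ∑ x, ∑ y, (∏ i, agreeWeight a b (x i) (y i)) * F x * G y

section pairExpect

variable {n : ℕ} (a b : ℝ)

lemma pairExpect_comm (F G : (Fin n → Bool) → ℝ) :
    pairExpect a b F G = pairExpect a b G F := by
  rw [pairExpect, Finset.sum_comm]
  refine sum_congr rfl fun y _ => sum_congr rfl fun x _ => ?_
  simp only [agreeWeight_comm a b (x _)]
  ring

lemma pairExpect_one_right (F : (Fin n → Bool) → ℝ) :
    pairExpect a b F 1 = (a + b) ^ n * ∑ x, F x := by
  simp only [pairExpect, Pi.one_apply, mul_one, ← Finset.sum_mul, sum_prod_agreeWeight,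
    Finset.mul_sum]

lemma pairExpect_succ (F G : (Fin (n + 1) → Bool) → ℝ) :
    pairExpect a b F G = ∑ s, ∑ t, agreeWeight a b s t *
      pairExpect a b (fun x => F (Fin.cons s x)) (fun y => G (Fin.cons t y)) := by
  simp only [pairExpect, Finset.mul_sum]
  rw [sum_fun_fin_succ]
  refine sum_congr rfl fun s _ => ?_
  simp only [sum_fun_fin_succ (fun y : Fin (n + 1) → Bool => _ * G y)]
  rw [Finset.sum_comm]
  refine sum_congr rfl fun t _ => sum_congr rfl fun x _ => sum_congr rfl fun y _ => ?_
  simp only [Fin.prod_univ_succ, Fin.cons_zero, Fin.cons_succ]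
  ring

lemma sum_agreeWeight_mul_le {P Q : Bool → ℝ} (hab : a ≤ b) (hP : Monotone P)
    (hQ : Monotone Q) :
    ∑ s, ∑ t, agreeWeight a b s t * (P s * Q t) ≤ (a + b) / 2 * ((∑ s, P s) * ∑ t, Q t) := by
  have hP' := sub_nonneg.2 (hP (Bool.false_le true))
  have hQ' := sub_nonneg.2 (hQ (Bool.false_le true))
  simp only [Fintype.sum_bool, agreeWeight, if_true, Bool.true_eq_false, Bool.false_eq_true,
    if_false]
  nlinarith [mul_nonneg (sub_nonneg.2 hab) (mul_nonneg hP' hQ')]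

theorem pairExpect_le (ha : 0 ≤ a) (hab : a ≤ b) {F G : (Fin n → Bool) → ℝ}
    (hF : Monotone F) (hG : Monotone G) :
    pairExpect a b F G ≤ ((a + b) / 2) ^ n * ((∑ x, F x) * ∑ y, G y) := by
  induction n with
  | zero => simp [pairExpect]
  | succ n ih =>
    have cons_mono {s t : Bool} (hst : s ≤ t) {x y : Fin n → Bool} (hxy : x ≤ y) :
        (Fin.cons s x : Fin (n + 1) → Bool) ≤ Fin.cons t y :=
      Fin.cons_le_cons.2 ⟨hst, hxy⟩
    set P : Bool → ℝ := fun s => ∑ x : Fin n → Bool, F (Fin.cons s x)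
    set Q : Bool → ℝ := fun t => ∑ y : Fin n → Bool, G (Fin.cons t y)
    have hP : Monotone P := fun s t hst => sum_le_sum fun x _ => hF (cons_mono hst le_rfl)
    have hQ : Monotone Q := fun s t hst => sum_le_sum fun y _ => hG (cons_mono hst le_rfl)
    have hw : ∀ s t, 0 ≤ agreeWeight a b s t := fun s t => by
      unfold agreeWeight; split_ifs <;> linarith
    calc pairExpect a b F G
        ≤ ∑ s, ∑ t, agreeWeight a b s t * (((a + b) / 2) ^ n * (P s * Q t)) := by
          rw [pairExpect_succ]
          gcongr with s _ t _
          · exact hw s t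
          · exact ih (hF.comp fun x y hxy => cons_mono le_rfl hxy)
              (hG.comp fun x y hxy => cons_mono le_rfl hxy)
      _ = ((a + b) / 2) ^ n * ∑ s, ∑ t, agreeWeight a b s t * (P s * Q t) := by
          simp only [Finset.mul_sum]
          exact sum_congr rfl fun s _ => sum_congr rfl fun t _ => by ring
      _ ≤ ((a + b) / 2) ^ n * ((a + b) / 2 * ((∑ s, P s) * ∑ t, Q t)) :=
          mul_le_mul_of_nonneg_left (sum_agreeWeight_mul_le a b hab hP hQ)
            (pow_nonneg (by linarith) n)
      _ = ((a + b) / 2) ^ (n + 1) * ((∑ x, F x) * ∑ y, G y) := by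
          rw [sum_fun_fin_succ F, sum_fun_fin_succ G, pow_succ]
          ring

variable {a b}

lemma pairExpect_one_right_of_add_eq (hab : a + b = 1 / 2) (F : (Fin n → Bool) → ℝ) :
    pairExpect a b F 1 = expect F := by
  rw [pairExpect_one_right, hab, expect, one_div_pow, one_div_mul_eq_div]

lemma pairExpect_one_left_of_add_eq (hab : a + b = 1 / 2) (G : (Fin n → Bool) → ℝ) :
    pairExpect a b 1 G = expect G := by
  rw [pairExpect_comm, pairExpect_one_right_of_add_eq hab]

lemma pairExpect_le_expect_mul (ha : 0 ≤ a) (hab : a ≤ b) (hsum : a + b = 1 / 2)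
    {F G : (Fin n → Bool) → ℝ} (hF : Monotone F) (hG : Monotone G) :
    pairExpect a b F G ≤ expect F * expect G := by
  calc pairExpect a b F G ≤ ((a + b) / 2) ^ n * ((∑ x, F x) * ∑ y, G y) :=
        pairExpect_le a b ha hab hF hG
    _ = expect F * expect G := by
        rw [hsum, expect, expect, div_mul_div_comm, ← mul_pow, div_eq_mul_inv _ ((2 * 2) ^ n),
          ← inv_pow]
        norm_num [mul_comm]

end pairExpect

section marginals

variable {n : ℕ} (α β γ : ℝ)

lemma sum_prProfile_third (x y : Fin n → Bool) :
    ∑ z, prProfile α β γ x y z = ∏ i, agreeWeight α (β + γ) (x i) (y i) := by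
  unfold prProfile
  rw [← Fintype.prod_sum]
  refine prod_congr rfl fun i _ => ?_
  cases x i <;> cases y i <;> simp [prTriple, agreeWeight, add_comm]

lemma sum_prProfile_second (x z : Fin n → Bool) :
    ∑ y, prProfile α β γ x y z = ∏ i, agreeWeight γ (α + β) (x i) (z i) := by
  unfold prProfile
  rw [← Fintype.prod_sum fun i t => prTriple α β γ (x i) t (z i)]
  refine prod_congr rfl fun i _ => ?_
  cases x i <;> cases z i <;> simp [prTriple, agreeWeight, add_comm]

lemma sum_prProfile_first (y z : Fin n → Bool) :
    ∑ x, prProfile α β γ x y z = ∏ i, agreeWeight β (α + γ) (y i) (z i) := by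
  unfold prProfile
  rw [← Fintype.prod_sum fun i t => prTriple α β γ t (y i) (z i)]
  refine prod_congr rfl fun i _ => ?_
  cases y i <;> cases z i <;> simp [prTriple, agreeWeight, add_comm]

variable (F G : (Fin n → Bool) → ℝ)

lemma sum_prProfile_mul_xy :
    ∑ x, ∑ y, ∑ z, prProfile α β γ x y z * (F x * G y) = pairExpect α (β + γ) F G := by
  refine sum_congr rfl fun x _ => sum_congr rfl fun y _ => ?_
  rw [← Finset.sum_mul, sum_prProfile_third, mul_assoc]

lemma sum_prProfile_mul_xz :
    ∑ x, ∑ y, ∑ z, prProfile α β γ x y z * (F x * G z) = pairExpect γ (α + β) F G := by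
  refine sum_congr rfl fun x _ => ?_
  rw [Finset.sum_comm]
  refine sum_congr rfl fun z _ => ?_
  rw [← Finset.sum_mul, sum_prProfile_second, mul_assoc]

lemma sum_prProfile_mul_yz :
    ∑ x, ∑ y, ∑ z, prProfile α β γ x y z * (F y * G z) = pairExpect β (α + γ) F G := by
  rw [Finset.sum_comm]
  refine sum_congr rfl fun y _ => ?_
  rw [Finset.sum_comm]
  refine sum_congr rfl fun z _ => ?_
  rw [← Finset.sum_mul, sum_prProfile_first, mul_assoc]

lemma W_eq_pairExpect (f g h : (Fin n → Bool) → ℝ) :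
    W α β γ f g h =
      pairExpect α (β + γ) f g + pairExpect γ (α + β) f h + pairExpect β (α + γ) g h
        - pairExpect α (β + γ) f 1 - pairExpect α (β + γ) 1 g - pairExpect γ (α + β) 1 h
        + pairExpect α (β + γ) (1 : (Fin n → Bool) → ℝ) 1 := by
  rw [← sum_prProfile_mul_xy α β γ f g, ← sum_prProfile_mul_xz α β γ f h,
    ← sum_prProfile_mul_yz α β γ g h, ← sum_prProfile_mul_xy α β γ f 1,
    ← sum_prProfile_mul_xy α β γ 1 g, ← sum_prProfile_mul_xz α β γ 1 h,
    ← sum_prProfile_mul_xy α β γ 1 1, W]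
  simp only [← Finset.sum_add_distrib, ← Finset.sum_sub_distrib]
  refine sum_congr rfl fun x _ => sum_congr rfl fun y _ => sum_congr rfl fun z _ => ?_
  simp only [Pi.one_apply]
  ring

end marginals

theorem monotone_irrationality_upper_bound_general {n : ℕ}
    (α β γ : ℝ) (hα₀ : 0 ≤ α) (hβ₀ : 0 ≤ β) (hγ₀ : 0 ≤ γ)
    (hα : α ≤ 1 / 4) (hβ : β ≤ 1 / 4) (hγ : γ ≤ 1 / 4)
    (hsum : α + β + γ = 1 / 2)
    (f g h : (Fin n → Bool) → ℝ)
    (hfm : MonotoneCube f) (hgm : MonotoneCube g) (hhm : MonotoneCube h) :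
    W α β γ f g h ≤
      expect f * expect g * expect h +
        (1 - expect f) * (1 - expect g) * (1 - expect h) := by
  have hxy : α + (β + γ) = 1 / 2 := by linarith
  have hxz : γ + (α + β) = 1 / 2 := by linarith
  have hyz : β + (α + γ) = 1 / 2 := by linarith
  have hfg := pairExpect_le_expect_mul hα₀ (by linarith) hxy hfm.monotone hgm.monotone
  have hfh := pairExpect_le_expect_mul hγ₀ (by linarith) hxz hfm.monotone hhm.monotone
  have hgh := pairExpect_le_expect_mul hβ₀ (by linarith) hyz hgm.monotone hhm.monotone
  rw [W_eq_pairExpect, pairExpect_one_right_of_add_eq hxy, pairExpect_one_left_of_add_eq hxy,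
    pairExpect_one_left_of_add_eq hxz, pairExpect_one_right_of_add_eq hxy, expect_one]
  linarith

/-- for monotone choice functions and an even product
distribution with `α, β, γ ≤ 1/4`,
`W(f,g,h) ≤ p₁p₂p₃ + (1-p₁)(1-p₂)(1-p₃)`. -/
theorem monotone_irrationality_upper_bound {n : ℕ} (hn : 1 ≤ n)
    (α β γ : ℝ) (hα₀ : 0 ≤ α) (hβ₀ : 0 ≤ β) (hγ₀ : 0 ≤ γ)
    (hα : α ≤ 1 / 4) (hβ : β ≤ 1 / 4) (hγ : γ ≤ 1 / 4)
    (hsum : α + β + γ = 1 / 2)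
    (f g h : (Fin n → Bool) → ℝ)
    (hf : IsBooleanFn f) (hg : IsBooleanFn g) (hh : IsBooleanFn h)
    (hfm : MonotoneCube f) (hgm : MonotoneCube g) (hhm : MonotoneCube h) :
    W α β γ f g h ≤
      expect f * expect g * expect h +
        (1 - expect f) * (1 - expect g) * (1 - expect h) :=
  monotone_irrationality_upper_bound_general α β γ hα₀ hβ₀ hγ₀ hα hβ hγ hsum f g h hfm hgm hhm

end GSWF
end
end

section
/- Let f, g : {0,1}^n → {0,1} be monotone increasing Boolean functions. Then for every δ with 0 ≤ δ ≤ 1 one has ⟨⟨f,g⟩⟩_δ ≥ 0, and for every δ with −1 ≤ δ ≤ 0 one has ⟨⟨f,g⟩⟩_δ ≤ 0 (equivalently, (1/δ)⟨⟨f,g⟩⟩_δ ≥ 0 for all nonzero δ ∈ [−1,1]). -/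
open Finset Real

noncomputable section

namespace GSWF

/-!
Let `(x, y)` be a `δ`-correlated pair of points of the cube, with unnormalized density
`∏ i, (1 + δ r_{{i}}(x) r_{{i}}(y))`. Expanding this product in Walsh functions shows that
`⟨⟨f,g⟩⟩_δ` is the covariance of `f x` and `g y`. For monotone `f` and `g` this covariance has
the sign of `δ`, by induction on `n` (as in the Harris–Kleitman inequality): conditioning on the
first coordinates of `x` and `y` splits the covariance into an average of covariances in dimension
`n` and a one-dimensional covariance, which is `δ / 4` times the product of the two nonnegative
increments of the conditional means.
-/

def pairWeight (δ : ℝ) (a b : Bool) : ℝ := if a = b then 1 + δ else 1 - δ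

/-- `4 ^ n` times the expectation of `f x * g y` over a `δ`-correlated pair `(x, y)`. -/
def corrSum {n : ℕ} (δ : ℝ) (f g : (Fin n → Bool) → ℝ) : ℝ :=
  ∑ x : Fin n → Bool, ∑ y : Fin n → Bool, f x * g y * ∏ i, pairWeight δ (x i) (y i)

lemma pairWeight_nonneg {δ : ℝ} (h₁ : -1 ≤ δ) (h₂ : δ ≤ 1) (a b : Bool) :
    0 ≤ pairWeight δ a b := by
  unfold pairWeight
  split_ifs <;> linarith

lemma pairWeight_eq_one_add (δ : ℝ) (a b : Bool) :
    pairWeight δ a b = 1 + δ * ((if a then 1 else -1) * (if b then 1 else -1)) := by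
  cases a <;> cases b <;>
    simp only [pairWeight, Bool.true_eq_false, Bool.false_eq_true, ↓reduceIte] <;> ring

lemma sum_pow_card_mul_walsh_mul_walsh {n : ℕ} (δ : ℝ) (x y : Fin n → Bool) :
    ∑ S : Finset (Fin n), δ ^ S.card * walsh S x * walsh S y
      = ∏ i, pairWeight δ (x i) (y i) := by
  simp only [pairWeight_eq_one_add, prod_one_add, powerset_univ, walsh, prod_mul_distrib,
    prod_const, mul_assoc]

lemma sum_coeff_mul_coeff_mul_pow {n : ℕ} (δ : ℝ) (f g : (Fin n → Bool) → ℝ) :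
    ∑ S : Finset (Fin n), coeff f S * coeff g S * δ ^ S.card
      = corrSum δ f g / (2 ^ n * 2 ^ n) := by
  have hS (S : Finset (Fin n)) : coeff f S * coeff g S * δ ^ S.card
      = (∑ x, ∑ y, f x * g y * (δ ^ S.card * walsh S x * walsh S y)) / (2 ^ n * 2 ^ n) := by
    rw [coeff, coeff, div_mul_div_comm, div_mul_eq_mul_div, sum_mul_sum, sum_mul]
    exact congrArg (· / _) <| sum_congr rfl fun x _ => by
      rw [sum_mul]; exact sum_congr rfl fun y _ => by ring
  simp only [hS, ← sum_div, corrSum, ← sum_pow_card_mul_walsh_mul_walsh, mul_sum]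
  rw [sum_comm]
  exact congrArg (· / _) <| sum_congr rfl fun x _ => sum_comm

theorem bip_eq_corrSum {n : ℕ} (δ : ℝ) (f g : (Fin n → Bool) → ℝ) :
    bip δ f g = (corrSum δ f g - (∑ x, f x) * ∑ y, g y) / (2 ^ n * 2 ^ n) := by
  rw [bip, filter_ne', sum_erase_eq_sub (mem_univ _), sum_coeff_mul_coeff_mul_pow, sub_div]
  simp [coeff, walsh, div_mul_div_comm]

theorem bip_zero {n : ℕ} (f g : (Fin n → Bool) → ℝ) : bip 0 f g = 0 :=
  sum_eq_zero fun S hS => by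
    simp [zero_pow (card_ne_zero.2 (nonempty_iff_ne_empty.2 (mem_filter.1 hS).2))]

lemma sum_pi_fin_succ {α M : Type*} [Fintype α] [AddCommMonoid M] {n : ℕ}
    (F : (Fin (n + 1) → α) → M) :
    ∑ x, F x = ∑ a, ∑ x : Fin n → α, F (Fin.cons a x) := by
  rw [← Fintype.sum_prod_type']
  exact (Fintype.sum_equiv (Fin.consEquiv fun _ => α) _ F fun _ => rfl).symm

lemma corrSum_succ {n : ℕ} (δ : ℝ) (f g : (Fin (n + 1) → Bool) → ℝ) :
    corrSum δ f g = ∑ a, ∑ b, pairWeight δ a b *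
      corrSum δ (fun x => f (Fin.cons a x)) (fun y => g (Fin.cons b y)) := by
  simp only [corrSum, sum_pi_fin_succ, Fin.prod_univ_succ, Fin.cons_zero, Fin.cons_succ, mul_sum]
  refine sum_congr rfl fun a _ => ?_
  rw [sum_comm]
  exact sum_congr rfl fun b _ => sum_congr rfl fun x _ => sum_congr rfl fun y _ => by ring

lemma sum_pairWeight_mul_mul (δ : ℝ) (F G : Bool → ℝ) :
    ∑ a, ∑ b, pairWeight δ a b * (F a * G b)
      = (∑ a, F a) * (∑ b, G b) + δ * ((F true - F false) * (G true - G false)) := by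
  simp only [Fintype.sum_bool, pairWeight, Bool.true_eq_false, Bool.false_eq_true, ↓reduceIte]
  ring

theorem mul_corrSum_sub_nonneg {n : ℕ} {δ : ℝ} (h₁ : -1 ≤ δ) (h₂ : δ ≤ 1)
    {f g : (Fin n → Bool) → ℝ} (hf : Monotone f) (hg : Monotone g) :
    0 ≤ δ * (corrSum δ f g - (∑ x, f x) * ∑ y, g y) := by
  induction n with
  | zero => simp [corrSum]
  | succ n ih =>
    have cons_mono (a : Bool) :
        Monotone fun x : Fin n → Bool => (Fin.cons a x : Fin (n + 1) → Bool) :=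
      fun _ _ h => Fin.cons_le_cons.2 ⟨le_rfl, h⟩
    set F : Bool → ℝ := fun a => ∑ x, f (Fin.cons a x)
    set G : Bool → ℝ := fun b => ∑ y, g (Fin.cons b y)
    have hF : F false ≤ F true :=
      sum_le_sum fun x _ => hf (Fin.cons_le_cons.2 ⟨Bool.false_le _, le_rfl⟩)
    have hG : G false ≤ G true :=
      sum_le_sum fun y _ => hg (Fin.cons_le_cons.2 ⟨Bool.false_le _, le_rfl⟩)
    have hrec (a b : Bool) : δ * (F a * G b) ≤
        δ * corrSum δ (fun x => f (Fin.cons a x)) (fun y => g (Fin.cons b y)) := by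
      rw [← sub_nonneg, ← mul_sub]
      exact ih (hf.comp (cons_mono a)) (hg.comp (cons_mono b))
    rw [mul_sub, sub_nonneg]
    calc δ * ((∑ x, f x) * ∑ y, g y)
        ≤ δ * ((∑ a, F a) * (∑ b, G b) + δ * ((F true - F false) * (G true - G false))) := by
          rw [sum_pi_fin_succ f, sum_pi_fin_succ g, mul_add]
          refine le_add_of_nonneg_right ?_
          rw [← mul_assoc]
          exact mul_nonneg (mul_self_nonneg δ) (mul_nonneg (sub_nonneg.2 hF) (sub_nonneg.2 hG))
      _ = ∑ a, ∑ b, pairWeight δ a b * (δ * (F a * G b)) := by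
          rw [← sum_pairWeight_mul_mul, mul_sum]
          exact sum_congr rfl fun a _ => by rw [mul_sum]; exact sum_congr rfl fun b _ => by ring
      _ ≤ ∑ a, ∑ b, pairWeight δ a b *
            (δ * corrSum δ (fun x => f (Fin.cons a x)) (fun y => g (Fin.cons b y))) :=
          sum_le_sum fun a _ => sum_le_sum fun b _ =>
            mul_le_mul_of_nonneg_left (hrec a b) (pairWeight_nonneg h₁ h₂ a b)
      _ = δ * corrSum δ f g := by
          rw [corrSum_succ, mul_sum]
          exact sum_congr rfl fun a _ => by rw [mul_sum]; exact sum_congr rfl fun b _ => by ring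

theorem mul_bip_nonneg {n : ℕ} {δ : ℝ} (h₁ : -1 ≤ δ) (h₂ : δ ≤ 1)
    {f g : (Fin n → Bool) → ℝ} (hf : Monotone f) (hg : Monotone g) :
    0 ≤ δ * bip δ f g := by
  rw [bip_eq_corrSum, mul_div_assoc']
  exact div_nonneg (mul_corrSum_sub_nonneg h₁ h₂ hf hg) (by positivity)

theorem monotone_biased_inner_product_sign_general {n : ℕ}
    (f g : (Fin n → Bool) → ℝ)
    (hfm : MonotoneCube f) (hgm : MonotoneCube g) :
    (∀ δ : ℝ, 0 ≤ δ → δ ≤ 1 → 0 ≤ bip δ f g) ∧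
    (∀ δ : ℝ, -1 ≤ δ → δ ≤ 0 → bip δ f g ≤ 0) := by
  have hf : Monotone f := fun x y h => hfm x y h
  have hg : Monotone g := fun x y h => hgm x y h
  refine ⟨fun δ h₀ h₁ => ?_, fun δ h₁ h₀ => ?_⟩
  · rcases h₀.eq_or_lt with rfl | hδ
    · exact (bip_zero f g).ge
    · exact nonneg_of_mul_nonneg_right (mul_bip_nonneg (by linarith) h₁ hf hg) hδ
  · rcases h₀.eq_or_lt' with rfl | hδ
    · exact (bip_zero f g).le
    · exact nonpos_of_mul_nonneg_right (mul_bip_nonneg h₁ (by linarith) hf hg) hδ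

/-- for monotone increasing Boolean functions `f, g`,
`⟨⟨f,g⟩⟩_δ ≥ 0` for `0 ≤ δ ≤ 1` and `⟨⟨f,g⟩⟩_δ ≤ 0` for `-1 ≤ δ ≤ 0`. -/
theorem monotone_biased_inner_product_sign {n : ℕ}
    (f g : (Fin n → Bool) → ℝ)
    (hf : IsBooleanFn f) (hg : IsBooleanFn g)
    (hfm : MonotoneCube f) (hgm : MonotoneCube g) :
    (∀ δ : ℝ, 0 ≤ δ → δ ≤ 1 → 0 ≤ bip δ f g) ∧
    (∀ δ : ℝ, -1 ≤ δ → δ ≤ 0 → bip δ f g ≤ 0) :=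
  monotone_biased_inner_product_sign_general f g hfm hgm

end GSWF
end
end

section
/- Consider a GSWF on three alternatives with n voters satisfying the IIA condition, whose choice functions f, g, h : {0,1}^n → {0,1} are all non-constant, with the individual preferences independent and uniformly distributed (i.e., distributed according to D(1/6,1/6,1/6)). If p₁ + p₂ + p₃ ≤ 1, where p₁ = E[f], p₂ = E[g], p₃ = E[h], then the probability of irrational choice is strictly positive: W(f,g,h) > 0. -/
open Finset Real

noncomputable section

namespace GSWF

/-! Expanding `fgh + (1-f)(1-g)(1-h) = 1 - f - g - h + fg + fh + gh` pointwise, and using that under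
`D(α,β,γ)` each of `x`, `y`, `z` is uniformly distributed when `α + β + γ = 1/2`, gives
`W = 1 - p₁ - p₂ - p₃ + E[f(x)g(y) + f(x)h(z) + g(y)h(z)]`. When `p₁ + p₂ + p₃ ≤ 1` the first part
is nonnegative, and the correlation `E[f(x)g(y)]` is positive: the pair `(x, y)` charges every point
of the cube, and the non-constant Boolean functions `f` and `g` both take the value `1`. -/

section Profile

variable {α β γ : ℝ} {n : ℕ}

theorem prTriple_nonneg (hα : 0 ≤ α) (hβ : 0 ≤ β) (hγ : 0 ≤ γ) (a b c : Bool) :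
    0 ≤ prTriple α β γ a b c := by
  cases a <;> cases b <;> cases c <;> simp [prTriple, hα, hβ, hγ]

theorem prProfile_nonneg (hα : 0 ≤ α) (hβ : 0 ≤ β) (hγ : 0 ≤ γ) (x y z : Fin n → Bool) :
    0 ≤ prProfile α β γ x y z :=
  Finset.prod_nonneg fun _ _ => prTriple_nonneg hα hβ hγ _ _ _

theorem sum_sum_prTriple_fst (a : Bool) :
    ∑ b, ∑ c, prTriple α β γ a b c = α + β + γ := by
  cases a <;> simp only [Fintype.sum_bool, prTriple] <;> ring

theorem sum_sum_prTriple_snd (b : Bool) :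
    ∑ a, ∑ c, prTriple α β γ a b c = α + β + γ := by
  cases b <;> simp only [Fintype.sum_bool, prTriple] <;> ring

theorem sum_sum_prTriple_thd (c : Bool) :
    ∑ a, ∑ b, prTriple α β γ a b c = α + β + γ := by
  cases c <;> simp only [Fintype.sum_bool, prTriple] <;> ring

theorem sum_prTriple_pos (hα : 0 < α) (hβγ : 0 < β + γ) (a b : Bool) :
    0 < ∑ c, prTriple α β γ a b c := by
  cases a <;> cases b <;> simp [prTriple, hα, hβγ, add_comm γ β]

theorem sum_sum_prod_apply (G : Fin n → Bool → Bool → ℝ) :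
    ∑ u : Fin n → Bool, ∑ v : Fin n → Bool, ∏ i, G i (u i) (v i) = ∏ i, ∑ b, ∑ c, G i b c := by
  rw [Fintype.prod_sum]
  exact Finset.sum_congr rfl fun u _ => (Fintype.prod_sum _).symm

theorem sum_sum_prProfile_fst (x : Fin n → Bool) :
    ∑ y, ∑ z, prProfile α β γ x y z = (α + β + γ) ^ n := by
  simp only [prProfile, sum_sum_prod_apply, sum_sum_prTriple_fst, Finset.prod_const,
    Finset.card_univ, Fintype.card_fin]

theorem sum_sum_prProfile_snd (y : Fin n → Bool) :
    ∑ x, ∑ z, prProfile α β γ x y z = (α + β + γ) ^ n := by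
  simp only [prProfile, sum_sum_prod_apply fun i a c => prTriple α β γ a (y i) c,
    sum_sum_prTriple_snd, Finset.prod_const, Finset.card_univ, Fintype.card_fin]

theorem sum_sum_prProfile_thd (z : Fin n → Bool) :
    ∑ x, ∑ y, prProfile α β γ x y z = (α + β + γ) ^ n := by
  simp only [prProfile, sum_sum_prod_apply fun i a b => prTriple α β γ a b (z i),
    sum_sum_prTriple_thd, Finset.prod_const, Finset.card_univ, Fintype.card_fin]

theorem sum_prProfile_pos (hα : 0 < α) (hβγ : 0 < β + γ) (x y : Fin n → Bool) :
    0 < ∑ z, prProfile α β γ x y z := by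
  simp only [prProfile]
  rw [← Fintype.prod_sum fun i c => prTriple α β γ (x i) (y i) c]
  exact Finset.prod_pos fun _ _ => sum_prTriple_pos hα hβγ _ _

theorem sum_mul_eq_expect (F : (Fin n → Bool) → ℝ) :
    ∑ x, (1 / 2 : ℝ) ^ n * F x = expect F := by
  rw [← Finset.mul_sum, expect, one_div, inv_pow, inv_mul_eq_div]

theorem sum_prProfile_mul_fst (hs : α + β + γ = 1 / 2) (F : (Fin n → Bool) → ℝ) :
    ∑ x, ∑ y, ∑ z, prProfile α β γ x y z * F x = expect F := by
  simp only [← Finset.sum_mul, sum_sum_prProfile_fst, hs, sum_mul_eq_expect]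

theorem sum_prProfile_mul_snd (hs : α + β + γ = 1 / 2) (F : (Fin n → Bool) → ℝ) :
    ∑ x, ∑ y, ∑ z, prProfile α β γ x y z * F y = expect F := by
  rw [Finset.sum_comm]
  simp only [← Finset.sum_mul, sum_sum_prProfile_snd, hs, sum_mul_eq_expect]

theorem sum_prProfile_mul_thd (hs : α + β + γ = 1 / 2) (F : (Fin n → Bool) → ℝ) :
    ∑ x, ∑ y, ∑ z, prProfile α β γ x y z * F z = expect F := by
  rw [Finset.sum_congr rfl fun x _ => Finset.sum_comm, Finset.sum_comm]
  simp only [← Finset.sum_mul, sum_sum_prProfile_thd, hs, sum_mul_eq_expect]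

theorem sum_prProfile (hs : α + β + γ = 1 / 2) :
    ∑ x : Fin n → Bool, ∑ y, ∑ z, prProfile α β γ x y z = 1 := by
  simpa [expect] using sum_prProfile_mul_fst (n := n) hs fun _ => 1

theorem W_eq_one_sub_expect_add_corr (hs : α + β + γ = 1 / 2) (f g h : (Fin n → Bool) → ℝ) :
    W α β γ f g h = 1 - expect f - expect g - expect h +
      ∑ x, ∑ y, ∑ z, prProfile α β γ x y z * (f x * g y + f x * h z + g y * h z) := by
  have expand : ∀ x y z, prProfile α β γ x y z *
      (f x * g y * h z + (1 - f x) * (1 - g y) * (1 - h z)) =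
      prProfile α β γ x y z - prProfile α β γ x y z * f x - prProfile α β γ x y z * g y
        - prProfile α β γ x y z * h z
        + prProfile α β γ x y z * (f x * g y + f x * h z + g y * h z) := by
    intros; ring
  simp only [W, expand, Finset.sum_add_distrib, Finset.sum_sub_distrib, sum_prProfile hs,
    sum_prProfile_mul_fst hs, sum_prProfile_mul_snd hs, sum_prProfile_mul_thd hs]

theorem sum_prProfile_mul_pos (hα : 0 < α) (hβ : 0 ≤ β) (hγ : 0 ≤ γ) (hβγ : 0 < β + γ)
    {F G : (Fin n → Bool) → ℝ} (hF : ∀ x, 0 ≤ F x) (hG : ∀ y, 0 ≤ G y)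
    {x₀ y₀ : Fin n → Bool} (hFx₀ : 0 < F x₀) (hGy₀ : 0 < G y₀) :
    0 < ∑ x, ∑ y, ∑ z, prProfile α β γ x y z * (F x * G y) := by
  simp only [← Finset.sum_mul]
  have term_nonneg : ∀ x y, 0 ≤ (∑ z, prProfile α β γ x y z) * (F x * G y) := fun x y =>
    mul_nonneg (Finset.sum_nonneg fun z _ => prProfile_nonneg hα.le hβ hγ x y z)
      (mul_nonneg (hF x) (hG y))
  have term_pos : 0 < (∑ z, prProfile α β γ x₀ y₀ z) * (F x₀ * G y₀) :=
    mul_pos (sum_prProfile_pos hα hβγ x₀ y₀) (mul_pos hFx₀ hGy₀)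
  exact Finset.sum_pos' (fun x _ => Finset.sum_nonneg fun y _ => term_nonneg x y)
    ⟨x₀, Finset.mem_univ _,
      Finset.sum_pos' (fun y _ => term_nonneg x₀ y) ⟨y₀, Finset.mem_univ _, term_pos⟩⟩

theorem W_pos_of_sum_expect_le_one (hα : 0 < α) (hβ : 0 ≤ β) (hγ : 0 ≤ γ)
    (hβγ : 0 < β + γ) (hs : α + β + γ = 1 / 2) {f g h : (Fin n → Bool) → ℝ}
    (hf : ∀ x, 0 ≤ f x) (hg : ∀ y, 0 ≤ g y) (hh : ∀ z, 0 ≤ h z)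
    {x₀ y₀ : Fin n → Bool} (hfx₀ : 0 < f x₀) (hgy₀ : 0 < g y₀)
    (hp : expect f + expect g + expect h ≤ 1) :
    0 < W α β γ f g h := by
  have corr_pos : 0 < ∑ x, ∑ y, ∑ z, prProfile α β γ x y z * (f x * g y) :=
    sum_prProfile_mul_pos hα hβ hγ hβγ hf hg hfx₀ hgy₀
  have corr_le : ∑ x, ∑ y, ∑ z, prProfile α β γ x y z * (f x * g y) ≤
      ∑ x, ∑ y, ∑ z, prProfile α β γ x y z * (f x * g y + f x * h z + g y * h z) :=
    Finset.sum_le_sum fun x _ => Finset.sum_le_sum fun y _ => Finset.sum_le_sum fun z _ =>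
      mul_le_mul_of_nonneg_left
        (by nlinarith [mul_nonneg (hf x) (hh z), mul_nonneg (hg y) (hh z)])
        (prProfile_nonneg hα.le hβ hγ x y z)
  rw [W_eq_one_sub_expect_add_corr hs]
  linarith

end Profile

theorem IsBooleanFn.nonneg {n : ℕ} {f : (Fin n → Bool) → ℝ} (hf : IsBooleanFn f)
    (x : Fin n → Bool) : 0 ≤ f x := by
  rcases hf x with h | h <;> simp [h]

theorem IsBooleanFn.exists_eq_one {n : ℕ} {f : (Fin n → Bool) → ℝ} (hf : IsBooleanFn f)
    (hfc : ∃ x y, f x ≠ f y) : ∃ x, f x = 1 := by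
  obtain ⟨x, y, hxy⟩ := hfc
  rcases hf x with hx | hx
  · exact ⟨y, (hf y).resolve_left fun hy => hxy (hx.trans hy.symm)⟩
  · exact ⟨x, hx⟩

theorem arrow_small_expectations_general {n : ℕ}
    (f g h : (Fin n → Bool) → ℝ)
    (hf : IsBooleanFn f) (hg : IsBooleanFn g) (hh : IsBooleanFn h)
    (hfc : ∃ x y, f x ≠ f y) (hgc : ∃ x y, g x ≠ g y)
    (hp : expect f + expect g + expect h ≤ 1) :
    0 < W (1 / 6) (1 / 6) (1 / 6) f g h := by
  obtain ⟨x₀, hfx₀⟩ := hf.exists_eq_one hfc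
  obtain ⟨y₀, hgy₀⟩ := hg.exists_eq_one hgc
  exact W_pos_of_sum_expect_le_one (by norm_num) (by norm_num) (by norm_num)
    (by norm_num) (by norm_num) hf.nonneg hg.nonneg hh.nonneg
    (hfx₀ ▸ one_pos) (hgy₀ ▸ one_pos) hp

/-- Arrow's theorem in the case `p₁ + p₂ + p₃ ≤ 1`: for
non-constant Boolean choice functions with uniform preferences,
`W(f,g,h) > 0`. -/
theorem arrow_small_expectations {n : ℕ} (hn : 1 ≤ n)
    (f g h : (Fin n → Bool) → ℝ)
    (hf : IsBooleanFn f) (hg : IsBooleanFn g) (hh : IsBooleanFn h)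
    (hfc : ∃ x y, f x ≠ f y) (hgc : ∃ x y, g x ≠ g y)
    (hhc : ∃ x y, h x ≠ h y)
    (hp : expect f + expect g + expect h ≤ 1) :
    0 < W (1 / 6) (1 / 6) (1 / 6) f g h :=
  arrow_small_expectations_general f g h hf hg hh hfc hgc hp

end GSWF
end
end
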